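/- arXiv:0710.2898 — 3 statements merged into one kernel-verified Lean document; each statement's English description precedes it below -/
import Mathlib

section
/- Let ℋ be a complex Hilbert space and let A ∈ B(ℋ) be normal. Suppose μ_m(A,t) ≤ 0 for some integer m ≥ 1 and some t ∈ ℝ, where μ_m(A,t) = λ_m((e^{−it}A − e^{it}A*)/(2i)). Then A admits an orthogonal decomposition A = A_1 ⊕ A_2 ⊕ Â such that dim A_1 < m, W(A_1) ⊆ e^{it}𝒫, W(A_2) ⊆ −e^{it}𝒫, and W(Â) ⊆ e^{it}ℝ, where 𝒫 = {z ∈ ℂ : Im(z) > 0} is the open upper half-plane. Furthermore, if λ_ℓ((e^{−it}Â + e^{it}Â*)/2) ≤ 0 for some ℓ ≥ 1, then Â admits a further orthogonal decomposition Â = A_3 ⊕ A_4 ⊕ 0 with dim A_3 < ℓ, W(A_3) ⊆ e^{it}(0,∞), and W(A_4) ⊆ e^{it}(−∞,0). Each summand may be zero-dimensional. -/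
/-!
Write `B = e^{-it} A`. Since `A` is normal, the self-adjoint operators `T = imOp B` and
`R = reOp B` commute with `A` and `A*`, and `Im ⟪x, e^{-it} A x⟫ = ⟪x, T x⟫`,
`Re ⟪x, e^{-it} A x⟫ = ⟪x, R x⟫`. The spectral subspaces `(ker T⁺)ᗮ`, `(ker T⁻)ᗮ` and `ker T`
are closed, mutually orthogonal, span `ℋ` and reduce `A`, and the quadratic form of `T` is
positive, negative and zero on them. If `(ker T⁺)ᗮ` contained an `m`-dimensional subspace, the
quadratic form of `T` would be bounded below by a positive constant on its (compact) unit sphere,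
contradicting `λ_m(T) ≤ 0`. The second decomposition is the same argument for the compression
`R P` of `R` to `ker T`, `P` being the orthogonal projection onto `ker T`.
-/

noncomputable section

open scoped InnerProductSpace
open Complex

variable {H : Type*} [NormedAddCommGroup H] [InnerProductSpace ℂ H] [CompleteSpace H]

/-- `P` is an orthogonal projection: self-adjoint and idempotent. -/
def IsOrthProj (P : H →L[ℂ] H) : Prop :=
  IsSelfAdjoint P ∧ P ∘L P = P

/-- The rank of a bounded operator, as a cardinal. -/
def opRank (F : H →L[ℂ] H) : Cardinal :=
  Module.rank ℂ (LinearMap.range (F : H →ₗ[ℂ] H))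

/-- The rank-`k` numerical range `Λ_k(A)`. -/
def rankKRange (k : ℕ) (A : H →L[ℂ] H) : Set ℂ :=
  { lam | ∃ P : H →L[ℂ] H, IsOrthProj P ∧ opRank P = k ∧ P ∘L A ∘L P = lam • P }

/-- The classical numerical range `W(A)`. -/
def numRange (A : H →L[ℂ] H) : Set ℂ :=
  { z | ∃ x : H, ‖x‖ = 1 ∧ ⟪x, A x⟫_ℂ = z }

/-- `λ_k(T)`: the supremum over `k`-dimensional compressions of the `k`-th largest
eigenvalue of the compression (Courant–Fischer form: sup over `k`-dimensional
subspaces of the infimum of the Rayleigh quotient). -/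
def lambdaSA (k : ℕ) (T : H →L[ℂ] H) : ℝ :=
  sSup { t : ℝ | ∃ V : Submodule ℂ H, Module.finrank ℂ V = k ∧
    ∀ x ∈ V, ‖x‖ = 1 → t ≤ (⟪x, T x⟫_ℂ).re }

/-- The real part `(T + T*)/2` of an operator. -/
def reOp (T : H →L[ℂ] H) : H →L[ℂ] H :=
  (2 : ℂ)⁻¹ • (T + ContinuousLinearMap.adjoint T)

/-- The set `Ω_k(A)`. -/
def omegaK (k : ℕ) (A : H →L[ℂ] H) : Set ℂ :=
  { μ | ∀ ξ ∈ Set.Ico (0 : ℝ) (2 * Real.pi),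
      (Complex.exp (ξ * Complex.I) * μ).re ≤ lambdaSA k (reOp (Complex.exp (ξ * Complex.I) • A)) }


/-- The imaginary part `(T - T*)/(2i)` of an operator. -/
def imOp (T : H →L[ℂ] H) : H →L[ℂ] H :=
  (2 * Complex.I)⁻¹ • (T - ContinuousLinearMap.adjoint T)

/-- `λ_k` of the compression of `T` to the (invariant) subspace `V`: the supremum over
`k`-dimensional subspaces of `V` of the infimum of the Rayleigh quotient. -/
def lambdaSub (k : ℕ) (T : H →L[ℂ] H) (V : Submodule ℂ H) : ℝ :=
  sSup { t : ℝ | ∃ W : Submodule ℂ H, W ≤ V ∧ Module.finrank ℂ W = k ∧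
    ∀ x ∈ W, ‖x‖ = 1 → t ≤ (⟪x, T x⟫_ℂ).re }

open ContinuousLinearMap Module.End

theorem Submodule.exists_le_finrank_eq_of_le_rank {K V : Type*} [DivisionRing K] [AddCommGroup V]
    [Module K V] {U : Submodule K V} {k : ℕ} (h : (k : Cardinal) ≤ Module.rank K U) :
    ∃ W ≤ U, Module.finrank K W = k := by
  obtain ⟨f, hf⟩ := exists_linearIndependent_of_le_rank h
  have hg : LinearIndependent K fun i => (f i : V) := hf.map' U.subtype U.ker_subtype
  refine ⟨span K (Set.range fun i => (f i : V)), span_le.mpr ?_, ?_⟩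
  · rintro _ ⟨i, rfl⟩
    exact (f i).2
  · rw [finrank_span_eq_card hg, Fintype.card_fin]

section

variable {E : Type*} [NormedAddCommGroup E] [InnerProductSpace ℂ E]

theorem ContinuousLinearMap.exists_pos_le_re_inner_of_finiteDimensional (S : E →L[ℂ] E)
    {W : Submodule ℂ E} [FiniteDimensional ℂ W] (hpos : ∀ x ∈ W, x ≠ 0 → 0 < (⟪x, S x⟫_ℂ).re) :
    ∃ c > 0, ∀ x ∈ W, ‖x‖ = 1 → c ≤ (⟪x, S x⟫_ℂ).re := by
  have hcont : Continuous fun w : W => (⟪(w : E), S w⟫_ℂ).re := by fun_prop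
  obtain ⟨c, hc, hcW⟩ := (isCompact_sphere (0 : W) 1).exists_forall_le' hcont.continuousOn
    fun w hw => hpos w w.2 (by simpa using ne_zero_of_mem_unit_sphere ⟨w, hw⟩)
  exact ⟨c, hc, fun x hx hx1 => hcW ⟨x, hx⟩ (by simpa using hx1)⟩

theorem le_lambdaSub {S : E →L[ℂ] E} {V W : Submodule ℂ E} {k : ℕ} {c : ℝ} (hk : 1 ≤ k)
    (hWV : W ≤ V) (hW : Module.finrank ℂ W = k) (hc : ∀ x ∈ W, ‖x‖ = 1 → c ≤ (⟪x, S x⟫_ℂ).re) :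
    c ≤ lambdaSub k S V := by
  refine le_csSup ⟨‖S‖, ?_⟩ ⟨W, hWV, hW, hc⟩
  rintro s ⟨W', -, hW', hs⟩
  have : Nontrivial W' := Module.nontrivial_of_finrank_pos (R := ℂ) (by omega)
  obtain ⟨x, hx⟩ := exists_norm_eq W' zero_le_one
  replace hx : ‖(x : E)‖ = 1 := hx
  calc s ≤ (⟪(x : E), S x⟫_ℂ).re := hs x x.2 hx
    _ ≤ ‖(x : E)‖ * ‖S x‖ := (Complex.re_le_norm _).trans (norm_inner_le_norm _ _)
    _ ≤ ‖(x : E)‖ * (‖S‖ * ‖(x : E)‖) := by gcongr; exact S.le_opNorm x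
    _ = ‖S‖ := by simp [hx]

theorem rank_lt_of_lambdaSub_nonpos {S : E →L[ℂ] E} {U V : Submodule ℂ E} {k : ℕ} (hk : 1 ≤ k)
    (hUV : U ≤ V) (hpos : ∀ x ∈ U, x ≠ 0 → 0 < (⟪x, S x⟫_ℂ).re) (hS : lambdaSub k S V ≤ 0) :
    Module.rank ℂ U < k := by
  by_contra! hU
  obtain ⟨W, hWU, hW⟩ := Submodule.exists_le_finrank_eq_of_le_rank hU
  have : FiniteDimensional ℂ W := Module.finite_of_finrank_pos (by omega)
  obtain ⟨c, hc, hcW⟩ := S.exists_pos_le_re_inner_of_finiteDimensional fun x hx => hpos x (hWU hx)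
  linarith [le_lambdaSub hk (hWU.trans hUV) hW hcW]

theorem lambdaSA_eq_lambdaSub_top (k : ℕ) (S : E →L[ℂ] E) : lambdaSA k S = lambdaSub k S ⊤ := by
  simp [lambdaSA, lambdaSub]

end

theorem isSelfAdjoint_reOp (T : H →L[ℂ] H) : IsSelfAdjoint (reOp T) := by
  rw [IsSelfAdjoint, reOp, star_smul, star_add, star_eq_adjoint, star_eq_adjoint, adjoint_adjoint,
    add_comm]
  norm_num

theorem isSelfAdjoint_imOp (T : H →L[ℂ] H) : IsSelfAdjoint (imOp T) := by
  rw [IsSelfAdjoint, imOp, star_smul, star_sub, star_eq_adjoint, star_eq_adjoint, adjoint_adjoint,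
    ← neg_sub, smul_neg, ← neg_smul]
  congr 1
  simp

theorem reOp_add_I_smul_imOp (T : H →L[ℂ] H) : reOp T + I • imOp T = T := by
  have h : I * (2 * I)⁻¹ = 2⁻¹ := by field_simp
  rw [reOp, imOp, smul_smul, h, ← smul_add]
  module

theorem ker_reOp_inf_ker_imOp_le (T : H →L[ℂ] H) : (reOp T).ker ⊓ (imOp T).ker ≤ T.ker :=
  fun x ⟨(hR : reOp T x = 0), (hI : imOp T x = 0)⟩ => show T x = 0 by
    rw [← reOp_add_I_smul_imOp T, add_apply, smul_apply, hR, hI, smul_zero, add_zero]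

theorem inner_reOp_apply_self (T : H →L[ℂ] H) (x : H) :
    ⟪x, reOp T x⟫_ℂ = (⟪x, T x⟫_ℂ).re := by
  rw [reOp, smul_apply, add_apply, inner_smul_right, inner_add_right, adjoint_inner_right,
    ← inner_conj_symm (T x) x, Complex.add_conj, ofReal_mul, ofReal_ofNat]
  ring

theorem inner_imOp_apply_self (T : H →L[ℂ] H) (x : H) :
    ⟪x, imOp T x⟫_ℂ = (⟪x, T x⟫_ℂ).im := by
  rw [imOp, smul_apply, sub_apply, inner_smul_right, inner_sub_right, adjoint_inner_right,
    ← inner_conj_symm (T x) x, Complex.sub_conj, ofReal_mul, ofReal_ofNat]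
  field_simp

theorem Commute.reOp_smul {C A : H →L[ℂ] H} (h : Commute C A) (h' : Commute C (adjoint A))
    (c : ℂ) : Commute C (reOp (c • A)) := by
  rw [reOp, ← star_eq_adjoint, star_smul, star_eq_adjoint]
  exact ((h.smul_right c).add_right (h'.smul_right _)).smul_right _

theorem Commute.imOp_smul {C A : H →L[ℂ] H} (h : Commute C A) (h' : Commute C (adjoint A))
    (c : ℂ) : Commute C (imOp (c • A)) := by
  rw [imOp, ← star_eq_adjoint, star_smul, star_eq_adjoint]
  exact ((h.smul_right c).sub_right (h'.smul_right _)).smul_right _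

theorem ContinuousLinearMap.apply_eq_zero_of_re_inner_eq_zero {P : H →L[ℂ] H} (hP : 0 ≤ P) {x : H}
    (hx : (⟪x, P x⟫_ℂ).re = 0) : P x = 0 := by
  obtain ⟨B, rfl⟩ := CStarAlgebra.nonneg_iff_eq_star_mul_self.mp hP
  have hBx : ‖B x‖ ^ 2 = 0 := by
    rwa [apply_norm_sq_eq_inner_adjoint_right, ← star_eq_adjoint, ← mul_def]
  rw [mul_apply_eq_comp, (by simpa using hBx : B x = 0), map_zero]

theorem ContinuousLinearMap.ker_mem_invtSubmodule_of_commute {R M : Type*} [Ring R]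
    [TopologicalSpace M] [AddCommGroup M] [Module R M] {C S : M →L[R] M} (h : Commute C S) :
    S.ker ∈ invtSubmodule (C : M →ₗ[R] M) := fun x (hx : S x = 0) =>
  show S (C x) = 0 by rw [← mul_apply_eq_comp, ← h.eq, mul_apply_eq_comp, hx, map_zero]

theorem Submodule.commute_starProjection {C : H →L[ℂ] H} {U : Submodule ℂ H}
    [U.HasOrthogonalProjection] (hU : U ∈ invtSubmodule (C : H →ₗ[ℂ] H))
    (hU' : U ∈ invtSubmodule (adjoint C : H →ₗ[ℂ] H)) : Commute C U.starProjection :=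
  (U.isIdempotentElem_starProjection.commute_iff.mpr
    ⟨by simpa using hU,
      by simpa using ContinuousLinearMap.mem_invtSubmodule_adjoint_iff.mp hU'⟩).symm

/-- The closure of the range of `S⁺`: the spectral subspace of `S` for `(0, ∞)`. -/
def positiveSubspace (S : H →L[ℂ] H) : Submodule ℂ H := (S⁺).kerᗮ

instance (S : H →L[ℂ] H) : (positiveSubspace S).HasOrthogonalProjection := by
  unfold positiveSubspace
  infer_instance

theorem isClosed_positiveSubspace (S : H →L[ℂ] H) : IsClosed (positiveSubspace S : Set H) :=
  Submodule.isClosed_orthogonal _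

theorem positiveSubspace_le_ker_negPart (S : H →L[ℂ] H) : positiveSubspace S ≤ (S⁻).ker := by
  rw [positiveSubspace, orthogonal_ker, (IsSelfAdjoint.of_nonneg (CFC.posPart_nonneg S)).adjoint_eq]
  refine Submodule.topologicalClosure_minimal _ (LinearMap.range_le_ker_iff.mpr ?_)
    (S⁻).isClosed_ker
  exact LinearMap.ext fun x => DFunLike.congr_fun (CFC.negPart_mul_posPart S) x

theorem positiveSubspace_isOrtho_neg (S : H →L[ℂ] H) :
    positiveSubspace S ⟂ positiveSubspace (-S) := by
  simpa [Submodule.IsOrtho, positiveSubspace, CFC.posPart_neg] using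
    positiveSubspace_le_ker_negPart S

namespace IsSelfAdjoint

variable {S : H →L[ℂ] H}

theorem ker_le_ker_posPart (hS : IsSelfAdjoint S) : S.ker ≤ (S⁺).ker := by
  intro x (hx : S x = 0)
  have hsq : S⁺ * S⁺ = S⁺ * S := by
    calc S⁺ * S⁺ = S⁺ * (S⁺ - S⁻) := by rw [mul_sub, CFC.posPart_mul_negPart, sub_zero]
      _ = S⁺ * S := by rw [CFC.posPart_sub_negPart S hS]
  have h : ‖S⁺ x‖ ^ 2 = 0 := by
    rw [apply_norm_sq_eq_inner_adjoint_right, ← star_eq_adjoint,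
      (IsSelfAdjoint.of_nonneg (CFC.posPart_nonneg S)).star_eq, ← mul_def, hsq,
      mul_apply_eq_comp, hx, map_zero, inner_zero_right, map_zero]
  simpa using h

theorem ker_le_ker_negPart (hS : IsSelfAdjoint S) : S.ker ≤ (S⁻).ker := by
  simpa [CFC.posPart_neg] using hS.neg.ker_le_ker_posPart

theorem ker_posPart_inf_ker_negPart (hS : IsSelfAdjoint S) : (S⁺).ker ⊓ (S⁻).ker = S.ker := by
  refine le_antisymm (fun x ⟨(hp : S⁺ x = 0), (hn : S⁻ x = 0)⟩ => ?_)
    (le_inf hS.ker_le_ker_posPart hS.ker_le_ker_negPart)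
  show S x = 0
  rw [← CFC.posPart_sub_negPart S hS, sub_apply, hp, hn, sub_zero]

theorem positiveSubspace_isOrtho_ker (hS : IsSelfAdjoint S) : positiveSubspace S ⟂ S.ker :=
  Submodule.orthogonal_le hS.ker_le_ker_posPart

theorem positiveSubspace_neg_isOrtho_ker (hS : IsSelfAdjoint S) :
    positiveSubspace (-S) ⟂ S.ker := by
  simpa using hS.neg.positiveSubspace_isOrtho_ker

theorem positiveSubspace_le (hS : IsSelfAdjoint S) {U : Submodule ℂ H} [U.HasOrthogonalProjection]
    (hU : Uᗮ ≤ S.ker) : positiveSubspace S ≤ U :=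
  (Submodule.orthogonal_le (hU.trans hS.ker_le_ker_posPart)).trans_eq U.orthogonal_orthogonal

theorem re_inner_pos_of_mem_positiveSubspace (hS : IsSelfAdjoint S) {x : H}
    (hx : x ∈ positiveSubspace S) (hx0 : x ≠ 0) : 0 < (⟪x, S x⟫_ℂ).re := by
  have hn : S⁻ x = 0 := positiveSubspace_le_ker_negPart S hx
  have hSx : S x = S⁺ x :=
    calc S x = (S⁺ - S⁻) x := by rw [CFC.posPart_sub_negPart S hS]
      _ = S⁺ x := by rw [sub_apply, hn, sub_zero]
  rw [hSx]
  have hnonneg := ((nonneg_iff_isPositive _).mp (CFC.posPart_nonneg S)).re_inner_nonneg_right x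
  refine lt_of_le_of_ne hnonneg fun h => hx0 ?_
  have hker : x ∈ (S⁺).ker := apply_eq_zero_of_re_inner_eq_zero (CFC.posPart_nonneg S) h.symm
  exact inner_self_eq_zero.mp (Submodule.inner_right_of_mem_orthogonal hker hx)

theorem re_inner_neg_of_mem_positiveSubspace_neg (hS : IsSelfAdjoint S) {x : H}
    (hx : x ∈ positiveSubspace (-S)) (hx0 : x ≠ 0) : (⟪x, S x⟫_ℂ).re < 0 := by
  simpa using hS.neg.re_inner_pos_of_mem_positiveSubspace hx hx0

theorem positiveSubspace_sup_sup_ker (hS : IsSelfAdjoint S) :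
    positiveSubspace S ⊔ positiveSubspace (-S) ⊔ S.ker = ⊤ := by
  have hN : positiveSubspace (-S) ≤ (S⁺).ker := by
    simpa [CFC.negPart_neg] using positiveSubspace_le_ker_negPart (-S)
  calc positiveSubspace S ⊔ positiveSubspace (-S) ⊔ S.ker
      = positiveSubspace S ⊔ (positiveSubspace (-S) ⊔ (positiveSubspace (-S))ᗮ ⊓ (S⁺).ker) := by
        simp [sup_assoc, positiveSubspace, CFC.posPart_neg, ← hS.ker_posPart_inf_ker_negPart,
          inf_comm]
    _ = ⊤ := by
        rw [Submodule.sup_orthogonal_inf_of_hasOrthogonalProjection hN, positiveSubspace, sup_comm,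
          Submodule.sup_orthogonal_of_hasOrthogonalProjection]

theorem positiveSubspace_sup_sup_ker_inf (hS : IsSelfAdjoint S) {U : Submodule ℂ H}
    [U.HasOrthogonalProjection] (hU : Uᗮ ≤ S.ker) :
    positiveSubspace S ⊔ positiveSubspace (-S) ⊔ S.ker ⊓ U = U := by
  have hPN : positiveSubspace S ⊔ positiveSubspace (-S) ≤ U :=
    sup_le (hS.positiveSubspace_le hU) (hS.neg.positiveSubspace_le (by simpa using hU))
  rw [← sup_inf_assoc_of_le _ hPN, hS.positiveSubspace_sup_sup_ker, top_inf_eq]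

theorem positiveSubspace_mem_invtSubmodule (hS : IsSelfAdjoint S) {C : H →L[ℂ] H}
    (hC : Commute C S) : positiveSubspace S ∈ invtSubmodule (C : H →ₗ[ℂ] H) := by
  refine orthogonal_mem_invtSubmodule (ker_mem_invtSubmodule_of_commute ?_)
  have h := hC.star_star
  rw [hS.star_eq, star_eq_adjoint] at h
  simpa [CFC.posPart_def] using (h.symm.cfcₙ_real _).symm

end IsSelfAdjoint

def IsReducingDecomposition (A : H →L[ℂ] H) (U V₁ V₂ V₃ : Submodule ℂ H) : Prop :=
  IsClosed (V₁ : Set H) ∧ IsClosed (V₂ : Set H) ∧ IsClosed (V₃ : Set H) ∧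
    (∀ x ∈ V₁, ∀ y ∈ V₂, ⟪x, y⟫_ℂ = 0) ∧ (∀ x ∈ V₁, ∀ y ∈ V₃, ⟪x, y⟫_ℂ = 0) ∧
    (∀ x ∈ V₂, ∀ y ∈ V₃, ⟪x, y⟫_ℂ = 0) ∧ V₁ ⊔ V₂ ⊔ V₃ = U ∧
    (∀ x ∈ V₁, A x ∈ V₁ ∧ adjoint A x ∈ V₁) ∧ (∀ x ∈ V₂, A x ∈ V₂ ∧ adjoint A x ∈ V₂) ∧
    (∀ x ∈ V₃, A x ∈ V₃ ∧ adjoint A x ∈ V₃)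

namespace IsSelfAdjoint

variable {S A : H →L[ℂ] H} {U : Submodule ℂ H} [U.HasOrthogonalProjection]

theorem isReducingDecomposition (hS : IsSelfAdjoint S) (hAS : Commute A S)
    (hA'S : Commute (adjoint A) S) (hUA : U ∈ invtSubmodule (A : H →ₗ[ℂ] H))
    (hUA' : U ∈ invtSubmodule (adjoint A : H →ₗ[ℂ] H)) (hU : Uᗮ ≤ S.ker) :
    IsReducingDecomposition A U (positiveSubspace S) (positiveSubspace (-S)) (S.ker ⊓ U) := by
  have reduces {V : Submodule ℂ H} (h : V ∈ invtSubmodule (A : H →ₗ[ℂ] H))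
      (h' : V ∈ invtSubmodule (adjoint A : H →ₗ[ℂ] H)) : ∀ x ∈ V, A x ∈ V ∧ adjoint A x ∈ V :=
    fun x hx => ⟨h hx, h' hx⟩
  refine ⟨isClosed_positiveSubspace S, isClosed_positiveSubspace (-S),
    S.isClosed_ker.inter (U.orthogonal_orthogonal ▸ Uᗮ.isClosed_orthogonal),
    Submodule.isOrtho_iff_inner_eq.mp (positiveSubspace_isOrtho_neg S),
    Submodule.isOrtho_iff_inner_eq.mp (hS.positiveSubspace_isOrtho_ker.mono_right inf_le_left),
    Submodule.isOrtho_iff_inner_eq.mp (hS.positiveSubspace_neg_isOrtho_ker.mono_right inf_le_left),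
    hS.positiveSubspace_sup_sup_ker_inf hU,
    reduces (hS.positiveSubspace_mem_invtSubmodule hAS)
      (hS.positiveSubspace_mem_invtSubmodule hA'S),
    reduces (hS.neg.positiveSubspace_mem_invtSubmodule hAS.neg_right)
      (hS.neg.positiveSubspace_mem_invtSubmodule hA'S.neg_right),
    reduces (invtSubmodule.inf_mem (ker_mem_invtSubmodule_of_commute hAS) hUA)
      (invtSubmodule.inf_mem (ker_mem_invtSubmodule_of_commute hA'S) hUA')⟩

theorem exists_reducingDecomposition_of_lambdaSub_nonpos (hS : IsSelfAdjoint S)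
    (hAS : Commute A S) (hA'S : Commute (adjoint A) S) (hUS : U ∈ invtSubmodule (S : H →ₗ[ℂ] H))
    (hUA : U ∈ invtSubmodule (A : H →ₗ[ℂ] H))
    (hUA' : U ∈ invtSubmodule (adjoint A : H →ₗ[ℂ] H)) {k : ℕ} (hk : 1 ≤ k)
    (hlam : lambdaSub k S U ≤ 0) :
    ∃ V₁ V₂, V₁ ≤ U ∧ V₂ ≤ U ∧ IsReducingDecomposition A U V₁ V₂ (S.ker ⊓ U) ∧
      Module.rank ℂ V₁ < k ∧ (∀ x ∈ V₁, ‖x‖ = 1 → 0 < (⟪x, S x⟫_ℂ).re) ∧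
      (∀ x ∈ V₂, ‖x‖ = 1 → (⟪x, S x⟫_ℂ).re < 0) := by
  have hAQ := U.commute_starProjection hUA hUA'
  have hA'Q := U.commute_starProjection hUA' (by rwa [adjoint_adjoint])
  have hSQ := U.commute_starProjection hUS (by rwa [hS.adjoint_eq])
  -- `S'` agrees with `S` on `U` and vanishes on `Uᗮ`, so its sign decomposition lives in `U`.
  set S' := S * U.starProjection
  have hS' : IsSelfAdjoint S' := (hS.commute_iff (isSelfAdjoint_starProjection U)).mp hSQ
  have hS'U : ∀ x ∈ U, S' x = S x := fun x hx => by
    rw [mul_apply_eq_comp, Submodule.starProjection_eq_self_iff.mpr hx]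
  have hker : Uᗮ ≤ S'.ker := fun x hx => show S (U.starProjection x) = 0 by
    have hQx : U.starProjection x = 0 := U.ker_starProjection.ge hx
    rw [hQx, map_zero]
  have hkerU : S'.ker ⊓ U = S.ker ⊓ U := Submodule.ext fun x =>
    and_congr_left fun hx => show S' x = 0 ↔ S x = 0 by rw [hS'U x hx]
  have hP := hS'.positiveSubspace_le hker
  have hN := hS'.neg.positiveSubspace_le (by simpa using hker)
  have hpos : ∀ x ∈ positiveSubspace S', x ≠ 0 → 0 < (⟪x, S x⟫_ℂ).re := fun x hx hx0 =>
    hS'U x (hP hx) ▸ hS'.re_inner_pos_of_mem_positiveSubspace hx hx0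
  refine ⟨_, _, hP, hN, hkerU ▸ hS'.isReducingDecomposition (hAS.mul_right hAQ)
      (hA'S.mul_right hA'Q) hUA hUA' hker, rank_lt_of_lambdaSub_nonpos hk hP hpos hlam,
    fun x hx hx1 => hpos x hx (ne_zero_of_norm_ne_zero (by simp [hx1])),
    fun x hx hx1 => hS'U x (hN hx) ▸ hS'.re_inner_neg_of_mem_positiveSubspace_neg hx
      (ne_zero_of_norm_ne_zero (by simp [hx1]))⟩

theorem exists_reducingDecomposition_of_lambdaSA_nonpos (hS : IsSelfAdjoint S)
    (hAS : Commute A S) (hA'S : Commute (adjoint A) S) {k : ℕ} (hk : 1 ≤ k)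
    (hlam : lambdaSA k S ≤ 0) :
    ∃ V₁ V₂, IsReducingDecomposition A ⊤ V₁ V₂ S.ker ∧
      Module.rank ℂ V₁ < k ∧ (∀ x ∈ V₁, ‖x‖ = 1 → 0 < (⟪x, S x⟫_ℂ).re) ∧
      (∀ x ∈ V₂, ‖x‖ = 1 → (⟪x, S x⟫_ℂ).re < 0) := by
  obtain ⟨V₁, V₂, -, -, hdec, hrest⟩ := hS.exists_reducingDecomposition_of_lambdaSub_nonpos hAS hA'S
    (U := ⊤) (invtSubmodule.top_mem _) (invtSubmodule.top_mem _) (invtSubmodule.top_mem _) hk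
    (by rwa [← lambdaSA_eq_lambdaSub_top])
  exact ⟨V₁, V₂, by simpa using hdec, hrest⟩

end IsSelfAdjoint

/-- Decomposition lemma for normal operators.  If `A` is normal and
`μ_m(A,t) = λ_m((e^{-it}A - e^{it}A^*)/(2i)) ≤ 0` for some `m ≥ 1` and `t ∈ ℝ`, then
`ℋ` decomposes orthogonally as `V₁ ⊕ V₂ ⊕ V₃`, each summand invariant under `A` and
`A*`, with `dim V₁ < m`, the numerical range of `A` restricted to `V₁` (resp. `V₂`,
`V₃`) contained in `e^{it}𝒫` (resp. `-e^{it}𝒫`, `e^{it}ℝ`).  Furthermore, whenever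
`λ_ℓ((e^{-it}Â + e^{it}Â^*)/2) ≤ 0` for the restriction `Â` of `A` to `V₃` and some
`ℓ ≥ 1`, then `V₃` decomposes further as `V₄ ⊕ V₅ ⊕ V₆` with `dim V₄ < ℓ`, the
numerical ranges of the restrictions to `V₄`, `V₅` contained in `e^{it}(0,∞)`,
`e^{it}(-∞,0)` respectively, and `A` vanishing on `V₆`. -/
theorem normal_decomposition_of_mu_nonpos
    (A : H →L[ℂ] H)
    (hA : ContinuousLinearMap.adjoint A ∘L A = A ∘L ContinuousLinearMap.adjoint A)
    (m : ℕ) (hm : 1 ≤ m) (t : ℝ)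
    (hmu : lambdaSA m (imOp (Complex.exp (-(t : ℂ) * Complex.I) • A)) ≤ 0) :
    ∃ V₁ V₂ V₃ : Submodule ℂ H,
      IsClosed (V₁ : Set H) ∧ IsClosed (V₂ : Set H) ∧ IsClosed (V₃ : Set H) ∧
      (∀ x ∈ V₁, ∀ y ∈ V₂, ⟪x, y⟫_ℂ = 0) ∧
      (∀ x ∈ V₁, ∀ y ∈ V₃, ⟪x, y⟫_ℂ = 0) ∧
      (∀ x ∈ V₂, ∀ y ∈ V₃, ⟪x, y⟫_ℂ = 0) ∧
      V₁ ⊔ V₂ ⊔ V₃ = ⊤ ∧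
      (∀ x ∈ V₁, A x ∈ V₁ ∧ ContinuousLinearMap.adjoint A x ∈ V₁) ∧
      (∀ x ∈ V₂, A x ∈ V₂ ∧ ContinuousLinearMap.adjoint A x ∈ V₂) ∧
      (∀ x ∈ V₃, A x ∈ V₃ ∧ ContinuousLinearMap.adjoint A x ∈ V₃) ∧
      Module.rank ℂ V₁ < m ∧
      (∀ x ∈ V₁, ‖x‖ = 1 → 0 < (Complex.exp (-(t : ℂ) * Complex.I) * ⟪x, A x⟫_ℂ).im) ∧
      (∀ x ∈ V₂, ‖x‖ = 1 → (Complex.exp (-(t : ℂ) * Complex.I) * ⟪x, A x⟫_ℂ).im < 0) ∧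
      (∀ x ∈ V₃, ‖x‖ = 1 → (Complex.exp (-(t : ℂ) * Complex.I) * ⟪x, A x⟫_ℂ).im = 0) ∧
      (∀ ℓ : ℕ, 1 ≤ ℓ →
        lambdaSub ℓ (reOp (Complex.exp (-(t : ℂ) * Complex.I) • A)) V₃ ≤ 0 →
        ∃ V₄ V₅ V₆ : Submodule ℂ H,
          V₄ ≤ V₃ ∧ V₅ ≤ V₃ ∧ V₆ ≤ V₃ ∧
          IsClosed (V₄ : Set H) ∧ IsClosed (V₅ : Set H) ∧ IsClosed (V₆ : Set H) ∧
          (∀ x ∈ V₄, ∀ y ∈ V₅, ⟪x, y⟫_ℂ = 0) ∧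
          (∀ x ∈ V₄, ∀ y ∈ V₆, ⟪x, y⟫_ℂ = 0) ∧
          (∀ x ∈ V₅, ∀ y ∈ V₆, ⟪x, y⟫_ℂ = 0) ∧
          V₄ ⊔ V₅ ⊔ V₆ = V₃ ∧
          (∀ x ∈ V₄, A x ∈ V₄ ∧ ContinuousLinearMap.adjoint A x ∈ V₄) ∧
          (∀ x ∈ V₅, A x ∈ V₅ ∧ ContinuousLinearMap.adjoint A x ∈ V₅) ∧
          (∀ x ∈ V₆, A x ∈ V₆ ∧ ContinuousLinearMap.adjoint A x ∈ V₆) ∧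
          Module.rank ℂ V₄ < ℓ ∧
          (∀ x ∈ V₄, ‖x‖ = 1 →
            (Complex.exp (-(t : ℂ) * Complex.I) * ⟪x, A x⟫_ℂ).im = 0 ∧
            0 < (Complex.exp (-(t : ℂ) * Complex.I) * ⟪x, A x⟫_ℂ).re) ∧
          (∀ x ∈ V₅, ‖x‖ = 1 →
            (Complex.exp (-(t : ℂ) * Complex.I) * ⟪x, A x⟫_ℂ).im = 0 ∧
            (Complex.exp (-(t : ℂ) * Complex.I) * ⟪x, A x⟫_ℂ).re < 0) ∧
          (∀ x ∈ V₆, A x = 0)) := by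
  set e := Complex.exp (-(t : ℂ) * Complex.I)
  have hAA' : Commute A (adjoint A) := hA.symm
  have hAT : Commute A (imOp (e • A)) := (Commute.refl A).imOp_smul hAA' e
  have hA'T : Commute (adjoint A) (imOp (e • A)) := hAA'.symm.imOp_smul (Commute.refl _) e
  have hAR : Commute A (reOp (e • A)) := (Commute.refl A).reOp_smul hAA' e
  have hA'R : Commute (adjoint A) (reOp (e • A)) := hAA'.symm.reOp_smul (Commute.refl _) e
  have him (x : H) : (e * ⟪x, A x⟫_ℂ).im = (⟪x, imOp (e • A) x⟫_ℂ).re := by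
    rw [inner_imOp_apply_self, ofReal_re, smul_apply, inner_smul_right]
  have hre (x : H) : (e * ⟪x, A x⟫_ℂ).re = (⟪x, reOp (e • A) x⟫_ℂ).re := by
    rw [inner_reOp_apply_self, ofReal_re, smul_apply, inner_smul_right]
  simp only [him, hre]
  obtain ⟨V₁, V₂, ⟨c₁, c₂, c₃, o₁₂, o₁₃, o₂₃, hsup, i₁, i₂, i₃⟩, hrank, hpos, hneg⟩ :=
    (isSelfAdjoint_imOp _).exists_reducingDecomposition_of_lambdaSA_nonpos hAT hA'T hm hmu
  refine ⟨V₁, V₂, _, c₁, c₂, c₃, o₁₂, o₁₃, o₂₃, hsup, i₁, i₂, i₃, hrank, hpos, hneg,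
    fun x hx _ => by simp [show imOp (e • A) x = 0 from hx], fun ℓ hℓ hlam => ?_⟩
  obtain ⟨V₄, V₅, h₄, h₅, ⟨c₄, c₅, c₆, o₄₅, o₄₆, o₅₆, hsup', i₄, i₅, i₆⟩, hrank', hpos', hneg'⟩ :=
    (isSelfAdjoint_reOp _).exists_reducingDecomposition_of_lambdaSub_nonpos hAR hA'R
      (ker_mem_invtSubmodule_of_commute (hAR.symm.imOp_smul hA'R.symm e))
      (ker_mem_invtSubmodule_of_commute hAT) (ker_mem_invtSubmodule_of_commute hA'T) hℓ hlam
  refine ⟨V₄, V₅, _, h₄, h₅, inf_le_right, c₄, c₅, c₆, o₄₅, o₄₆, o₅₆, hsup', i₄, i₅, i₆, hrank',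
    fun x hx hx1 => ⟨by simp [show imOp (e • A) x = 0 from h₄ hx], hpos' x hx hx1⟩,
    fun x hx hx1 => ⟨by simp [show imOp (e • A) x = 0 from h₅ hx], hneg' x hx hx1⟩,
    fun x hx => ?_⟩
  have hBx : e • A x = 0 := ker_reOp_inf_ker_imOp_le (e • A) hx
  exact (smul_eq_zero.mp hBx).resolve_left (Complex.exp_ne_zero _)
end
end

section
/- Let ℋ be a complex Hilbert space, let A ∈ B(ℋ) be self-adjoint, let k be a positive integer with k ≤ dim ℋ, and let λ ∈ ℝ. Then λ ∉ Λ_k(A) if and only if A admits an orthogonal decomposition A = Ã₁ ⊕ Ã₂ such that dim Ã₁ < k, W(Ã₁) ⊆ L, and W(Ã₂) ⊆ ℝ \ L, where L = [λ, ∞) or L = (−∞, λ]. -/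
noncomputable section

open scoped InnerProductSpace
open Complex

variable {H : Type*} [NormedAddCommGroup H] [InnerProductSpace ℂ H] [CompleteSpace H]

/-!
Put `T = A - λ`. The kernels of the negative and positive parts `T⁻`, `T⁺` are the spectral
subspaces `N₊`, `N₋` of `T` for `[0, ∞)` and `(-∞, 0]`: they are closed and `A`-invariant,
`⟪x, T x⟫ ≥ 0` on `N₊` and `⟪x, T x⟫ < 0` on `N₊ᗮ \ {0}`, and symmetrically for `N₋`. So if
`dim N₊ < k` (or `dim N₋ < k`), then `N₊ ⊕ N₊ᗮ` (or `N₋ ⊕ N₋ᗮ`) is the required decomposition.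

Otherwise there is a `k`-dimensional subspace `U` on which the form `⟪x, T y⟫` vanishes, and the
orthogonal projection onto `U` shows `λ ∈ Λ_k(A)`. Such a `U` is a piece of `ker T = N₊ ⊓ N₋`
plus, when `ker T` is too small, the span of vectors `α uᵢ + β vᵢ`, where `u` and `v` are
orthonormal families in `N₋ᗮ ≤ N₊` and `N₊ᗮ ≤ N₋` diagonalising the form (eigenbases of
compressions of `T`) and `α, β` balance `⟪uᵢ, T uᵢ⟫ ≥ 0` against `⟪vᵢ, T vᵢ⟫ ≤ 0`.

Conversely, a rank-`k` projection `P` with `PAP = λP` has a unit vector `x` in its range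
orthogonal to any `V₁` of dimension `< k`, and `⟪x, A x⟫ = λ`; as `λ ∈ L`, this vector cannot lie
in `V₂`, whose numerical range avoids `L`.
-/

lemma natCast_sub_le_of_le_add {k d : ℕ} {c : Cardinal} (h : (k : Cardinal) ≤ d + c) :
    ((k - d : ℕ) : Cardinal) ≤ c := by
  rcases lt_or_ge c Cardinal.aleph0 with hc | hc
  · obtain ⟨n, rfl⟩ := Cardinal.lt_aleph0.mp hc
    norm_cast at h ⊢
    omega
  · exact Cardinal.natCast_lt_aleph0.le.trans hc

lemma Submodule.exists_le_finrank_eq {K V : Type*} [DivisionRing K] [AddCommGroup V] [Module K V]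
    {S : Submodule K V} {k : ℕ} (hk : (k : Cardinal) ≤ Module.rank K S) :
    ∃ U ≤ S, FiniteDimensional K U ∧ Module.finrank K U = k := by
  obtain ⟨f, hf⟩ := exists_linearIndependent_of_le_rank hk
  refine ⟨Submodule.span K (Set.range (S.subtype ∘ f)), ?_,
    FiniteDimensional.span_of_finite K (Set.finite_range _), ?_⟩
  · rw [Submodule.span_le]
    rintro _ ⟨i, rfl⟩
    exact (f i).2
  · rw [finrank_span_eq_card (hf.map' S.subtype S.ker_subtype), Fintype.card_fin]

section InnerProductSpace

variable {𝕜 E : Type*} [RCLike 𝕜] [NormedAddCommGroup E] [InnerProductSpace 𝕜 E]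

lemma Submodule.exists_ne_zero_mem_orthogonal {S F : Submodule 𝕜 E} [FiniteDimensional 𝕜 F]
    (h : Module.rank 𝕜 F < Module.rank 𝕜 S) : ∃ x ∈ S, x ∈ Fᗮ ∧ x ≠ 0 := by
  set π : S →ₗ[𝕜] F := F.orthogonalProjectionOnto.toLinearMap ∘ₗ S.subtype
  have hπ : LinearMap.ker π ≠ ⊥ := fun hker =>
    (LinearMap.rank_le_of_injective π (LinearMap.ker_eq_bot.mp hker)).not_gt h
  obtain ⟨x, hx, hx0⟩ := Submodule.exists_mem_ne_zero_of_ne_bot hπ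
  exact ⟨x, x.2, Submodule.orthogonalProjectionOnto_eq_zero_iff.mp hx, by simpa using hx0⟩

lemma Submodule.natCast_sub_finrank_le_rank_orthogonal {M N K : Submodule 𝕜 E}
    [N.HasOrthogonalProjection] [FiniteDimensional 𝕜 K] (hNM : Nᗮ ≤ M) (hK : M ⊓ N ≤ K) {k : ℕ}
    (hk : (k : Cardinal) ≤ Module.rank 𝕜 M) :
    ((k - Module.finrank 𝕜 K : ℕ) : Cardinal) ≤ Module.rank 𝕜 Nᗮ := by
  have hM : Nᗮ ⊔ N ⊓ M = M := by
    rw [← sup_inf_assoc_of_le N hNM, sup_comm, N.sup_orthogonal_of_hasOrthogonalProjection,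
      top_inf_eq]
  refine natCast_sub_le_of_le_add (hk.trans ?_)
  calc Module.rank 𝕜 M = Module.rank 𝕜 ↥(Nᗮ ⊔ N ⊓ M) := by rw [hM]
    _ ≤ Module.rank 𝕜 ↥(Nᗮ ⊔ N ⊓ M) + Module.rank 𝕜 ↥(Nᗮ ⊓ (N ⊓ M)) := le_self_add
    _ = Module.rank 𝕜 ↥(M ⊓ N) + Module.rank 𝕜 Nᗮ := by
      rw [Submodule.rank_sup_add_rank_inf_eq, inf_comm N, add_comm]
    _ ≤ Module.finrank 𝕜 K + Module.rank 𝕜 Nᗮ := by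
      rw [Module.finrank_eq_rank]
      exact add_le_add_left (Submodule.rank_mono hK) _

lemma Submodule.orthogonal_le_of_sup_eq_top {V₁ V₂ : Submodule 𝕜 E}
    (horth : ∀ x ∈ V₁, ∀ y ∈ V₂, ⟪x, y⟫_𝕜 = 0) (hsup : V₁ ⊔ V₂ = ⊤) : V₁ᗮ ≤ V₂ := by
  have h : V₂ ≤ V₁ᗮ := fun y hy => (Submodule.mem_orthogonal _ _).mpr fun x hx => horth x hx y hy
  refine le_of_eq ?_
  calc V₁ᗮ = (V₂ ⊔ V₁) ⊓ V₁ᗮ := by rw [sup_comm, hsup, top_inf_eq]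
    _ = V₂ ⊔ V₁ ⊓ V₁ᗮ := sup_inf_assoc_of_le V₁ h
    _ = V₂ := by rw [Submodule.inf_orthogonal_eq_bot, sup_bot_eq]

/-- `U` is neutral for the form `⟪x, T y⟫`, i.e. the compression of `T` to `U` vanishes. -/
def IsNeutral (T : E →L[𝕜] E) (U : Submodule 𝕜 E) : Prop :=
  ∀ x ∈ U, ∀ y ∈ U, ⟪x, T y⟫_𝕜 = 0

variable {T : E →L[𝕜] E}

lemma isNeutral_of_le_ker {U : Submodule 𝕜 E} (hU : U ≤ LinearMap.ker T.toLinearMap) :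
    IsNeutral T U :=
  fun _ _ y hy => by rw [show T y = 0 from hU hy, inner_zero_right]

lemma isNeutral_span {s : Set E} (hs : ∀ x ∈ s, ∀ y ∈ s, ⟪x, T y⟫_𝕜 = 0) :
    IsNeutral T (Submodule.span 𝕜 s) := by
  intro x hx y hy
  induction hx using Submodule.span_induction with
  | mem x hx =>
    induction hy using Submodule.span_induction with
    | mem y hy => exact hs x hx y hy
    | zero => simp
    | add _ _ _ _ h₁ h₂ => simp [inner_add_right, h₁, h₂]
    | smul _ _ _ h => simp [inner_smul_right, h]
  | zero => simp
  | add _ _ _ _ h₁ h₂ => simp [inner_add_left, h₁, h₂]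
  | smul _ _ _ h => simp [inner_smul_left, h]

lemma IsSelfAdjoint.apply_mem_orthogonal [CompleteSpace E] (hT : IsSelfAdjoint T)
    {V : Submodule 𝕜 E} (hV : ∀ x ∈ V, T x ∈ V) {x : E} (hx : x ∈ Vᗮ) : T x ∈ Vᗮ := by
  rw [Submodule.mem_orthogonal] at hx ⊢
  intro y hy
  rw [← ContinuousLinearMap.adjoint_inner_left, hT.adjoint_eq]
  exact hx _ (hV y hy)

lemma exists_isNeutral_of_orthonormal {m : ℕ} {z : Fin m → E} (hz : Orthonormal 𝕜 z)
    (hTz : ∀ i j, ⟪z i, T (z j)⟫_𝕜 = 0) {S : Submodule 𝕜 E} (hzS : ∀ i, z i ∈ S) :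
    ∃ Z ≤ S, FiniteDimensional 𝕜 Z ∧ Module.finrank 𝕜 Z = m ∧ IsNeutral T Z := by
  refine ⟨Submodule.span 𝕜 (Set.range z), ?_, FiniteDimensional.span_of_finite 𝕜
    (Set.finite_range z), ?_, isNeutral_span ?_⟩
  · rw [Submodule.span_le]
    rintro _ ⟨i, rfl⟩
    exact hzS i
  · rw [finrank_span_eq_card hz.linearIndependent, Fintype.card_fin]
  · rintro _ ⟨i, rfl⟩ _ ⟨j, rfl⟩
    exact hTz i j

lemma IsNeutral.sup_of_le_ker [CompleteSpace E] (hT : IsSelfAdjoint T) {W Z : Submodule 𝕜 E}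
    (hZ : IsNeutral T Z) (hW : W ≤ LinearMap.ker T.toLinearMap) : IsNeutral T (W ⊔ Z) := by
  intro x hx y hy
  obtain ⟨w, hw, z, hz, rfl⟩ := Submodule.mem_sup.mp hx
  obtain ⟨w', hw', z', hz', rfl⟩ := Submodule.mem_sup.mp hy
  have hTw : T w = 0 := hW hw
  have hTw' : T w' = 0 := hW hw'
  rw [map_add, hTw', zero_add, inner_add_left, hZ z hz z' hz',
    ← ContinuousLinearMap.adjoint_inner_left, hT.adjoint_eq, hTw, inner_zero_left, add_zero]

end InnerProductSpace

lemma re_inner_apply_self_pos_of_nonneg {P : H →L[ℂ] H} (hP : 0 ≤ P) {x : H} (hx : P x ≠ 0) :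
    0 < re ⟪x, P x⟫_ℂ := by
  obtain ⟨s, rfl⟩ := CStarAlgebra.nonneg_iff_eq_star_mul_self.mp hP
  have hsx : s x ≠ 0 := fun h => hx (by simp [h])
  rw [ContinuousLinearMap.star_eq_adjoint, mul_apply_eq_comp,
    ContinuousLinearMap.adjoint_inner_right, inner_self_eq_norm_sq_to_K]
  norm_cast
  exact pow_pos (norm_pos_iff.mpr hsx) 2

lemma IsSelfAdjoint.ofReal_re_inner_apply_self {T : H →L[ℂ] H} (hT : IsSelfAdjoint T) (x : H) :
    ((re ⟪x, T x⟫_ℂ : ℝ) : ℂ) = ⟪x, T x⟫_ℂ := by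
  have h : ⟪T x, x⟫_ℂ = ⟪x, T x⟫_ℂ := hT.isSymmetric x x
  rw [← h]
  exact hT.isSymmetric.coe_re_inner_apply_self x

lemma isSelfAdjoint_sub_ofReal_smul_one {A : H →L[ℂ] H} (hA : IsSelfAdjoint A) (lam : ℝ) :
    IsSelfAdjoint (A - (lam : ℂ) • 1) :=
  hA.sub (.smul (conj_ofReal lam) (.one _))

/-- The spectral subspace of `T` for `[0, ∞)`. -/
def nonnegSubspace (T : H →L[ℂ] H) : Submodule ℂ H :=
  LinearMap.ker (T⁻ : H →L[ℂ] H).toLinearMap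

section nonnegSubspace

variable {T : H →L[ℂ] H}

lemma mem_nonnegSubspace {x : H} : x ∈ nonnegSubspace T ↔ T⁻ x = 0 := LinearMap.mem_ker

lemma isClosed_nonnegSubspace (T : H →L[ℂ] H) : IsClosed (nonnegSubspace T : Set H) :=
  ContinuousLinearMap.isClosed_ker _

lemma apply_eq_posPart_apply {x : H} (hT : IsSelfAdjoint T) (hx : x ∈ nonnegSubspace T) :
    T x = T⁺ x := by
  conv_lhs => rw [← CFC.posPart_sub_negPart T hT]
  simp [mem_nonnegSubspace.mp hx]

lemma apply_mem_nonnegSubspace {x : H} (hT : IsSelfAdjoint T) (hx : x ∈ nonnegSubspace T) :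
    T x ∈ nonnegSubspace T := by
  rw [apply_eq_posPart_apply hT hx, mem_nonnegSubspace, ← mul_apply_eq_comp,
    CFC.negPart_mul_posPart, zero_apply]

lemma orthogonal_nonnegSubspace_le (T : H →L[ℂ] H) :
    (nonnegSubspace T)ᗮ ≤ nonnegSubspace (-T) := by
  intro x hx
  rw [mem_nonnegSubspace, CFC.negPart_neg]
  refine ext_inner_left ℂ fun y => ?_
  rw [← ContinuousLinearMap.adjoint_inner_left, (CFC.posPart_nonneg T).isSelfAdjoint.adjoint_eq,
    inner_zero_right]
  refine Submodule.inner_right_of_mem_orthogonal ?_ hx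
  rw [mem_nonnegSubspace, ← mul_apply_eq_comp, CFC.negPart_mul_posPart, zero_apply]

lemma re_inner_apply_self_nonneg {x : H} (hT : IsSelfAdjoint T) (hx : x ∈ nonnegSubspace T) :
    0 ≤ re ⟪x, T x⟫_ℂ := by
  rw [apply_eq_posPart_apply hT hx]
  exact ((ContinuousLinearMap.nonneg_iff_isPositive _).mp
    (CFC.posPart_nonneg T)).re_inner_nonneg_right x

lemma re_inner_apply_self_neg {x : H} (hT : IsSelfAdjoint T)
    (hx : x ∈ (nonnegSubspace T)ᗮ) (hx0 : x ≠ 0) : re ⟪x, T x⟫_ℂ < 0 := by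
  have hTx : T x = -T⁻ x := by
    have hpos : T⁺ x = 0 := by
      simpa [mem_nonnegSubspace, CFC.negPart_neg] using orthogonal_nonnegSubspace_le T hx
    conv_lhs => rw [← CFC.posPart_sub_negPart T hT]
    simp [hpos]
  have hneg : T⁻ x ≠ 0 := fun h =>
    hx0 (inner_self_eq_zero.mp (Submodule.inner_right_of_mem_orthogonal
      (mem_nonnegSubspace.mpr h) hx))
  rw [hTx, inner_neg_right, neg_re, neg_lt_zero]
  exact re_inner_apply_self_pos_of_nonneg (CFC.negPart_nonneg T) hneg

lemma nonnegSubspace_inf_nonnegSubspace_neg_le_ker (hT : IsSelfAdjoint T) :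
    nonnegSubspace T ⊓ nonnegSubspace (-T) ≤ LinearMap.ker T.toLinearMap := by
  intro x hxK
  obtain ⟨hx, hx'⟩ := Submodule.mem_inf.mp hxK
  rw [mem_nonnegSubspace] at hx hx'
  rw [CFC.negPart_neg] at hx'
  change T x = 0
  rw [← CFC.posPart_sub_negPart T hT, sub_apply, hx, hx', sub_zero]

end nonnegSubspace

lemma mem_rankKRange_of_isNeutral {A : H →L[ℂ] H} {μ : ℂ} (U : Submodule ℂ H)
    [FiniteDimensional ℂ U] (hU : IsNeutral (A - μ • 1) U) :
    μ ∈ rankKRange (Module.finrank ℂ U) A := by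
  set P := U.starProjection
  have hP : ∀ x y, ⟪P x, y⟫_ℂ = ⟪x, P y⟫_ℂ := (isSelfAdjoint_starProjection U).isSymmetric
  refine ⟨P, ⟨isSelfAdjoint_starProjection U, U.isIdempotentElem_starProjection.eq⟩, ?_, ?_⟩
  · rw [opRank, Submodule.range_starProjection, Module.finrank_eq_rank]
  · ext x
    refine ext_inner_left ℂ fun y => ?_
    have h := hU _ (U.starProjection_apply_mem y) _ (U.starProjection_apply_mem x)
    simp only [sub_apply, smul_apply, one_apply_eq_self, inner_sub_right, inner_smul_right,
      sub_eq_zero] at h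
    calc ⟪y, P (A (P x))⟫_ℂ = ⟪P y, A (P x)⟫_ℂ := (hP _ _).symm
      _ = μ * ⟪y, P (P x)⟫_ℂ := by rw [h, hP]
      _ = ⟪y, (μ • P) x⟫_ℂ := by
        rw [smul_apply, inner_smul_right, ← mul_apply_eq_comp, U.isIdempotentElem_starProjection.eq]

lemma exists_mem_orthogonal_inner_apply_self_eq_of_mem_rankKRange {A : H →L[ℂ] H} {k : ℕ}
    {μ : ℂ} (h : μ ∈ rankKRange k A) {V : Submodule ℂ H} (hV : Module.rank ℂ V < k) :
    ∃ x ∈ Vᗮ, ‖x‖ = 1 ∧ ⟪x, A x⟫_ℂ = μ := by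
  obtain ⟨P, ⟨hPsa, hPP⟩, hPk, hPAP⟩ := h
  have : FiniteDimensional ℂ V :=
    Module.rank_lt_aleph0_iff.mp (hV.trans Cardinal.natCast_lt_aleph0)
  obtain ⟨x, hxP, hxV, hx0⟩ := Submodule.exists_ne_zero_mem_orthogonal
    (S := LinearMap.range P.toLinearMap) (F := V) (by rwa [← opRank, hPk])
  have hPx : P x = x := by
    obtain ⟨z, rfl⟩ := hxP
    exact congrArg (· z) hPP
  set y := (‖x‖ : ℂ)⁻¹ • x
  have hy : ‖y‖ = 1 := norm_smul_inv_norm hx0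
  have hPy : P y = y := by rw [map_smul, hPx]
  have hP : ∀ a b, ⟪P a, b⟫_ℂ = ⟪a, P b⟫_ℂ := hPsa.isSymmetric
  refine ⟨y, Vᗮ.smul_mem _ hxV, hy, ?_⟩
  calc ⟪y, A y⟫_ℂ = ⟪P y, A (P y)⟫_ℂ := by rw [hPy]
    _ = ⟪y, (P ∘L A ∘L P) y⟫_ℂ := hP _ _
    _ = μ := by
      rw [hPAP, smul_apply, inner_smul_right, hPy, inner_self_eq_norm_sq_to_K, hy]
      simp

lemma exists_sq_add_sq_eq_one_and_sq_mul_eq {a c : ℝ} (ha : 0 ≤ a) (hc : 0 ≤ c) :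
    ∃ α β : ℝ, α ^ 2 + β ^ 2 = 1 ∧ α ^ 2 * a = β ^ 2 * c := by
  rcases (add_nonneg ha hc).eq_or_lt with h | h
  · exact ⟨1, 0, by norm_num, by nlinarith⟩
  · refine ⟨√(c / (a + c)), √(a / (a + c)), ?_, ?_⟩
    all_goals rw [Real.sq_sqrt (by positivity), Real.sq_sqrt (by positivity)]
    · field_simp
      ring
    · field_simp

lemma exists_orthonormal_pairwise_inner_apply_eq_zero {T : H →L[ℂ] H} (hT : IsSelfAdjoint T)
    {S : Submodule ℂ H} {m : ℕ} (hm : (m : Cardinal) ≤ Module.rank ℂ S) :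
    ∃ u : Fin m → H, Orthonormal ℂ u ∧ (∀ i, u i ∈ S) ∧
      Pairwise fun i j => ⟪u i, T (u j)⟫_ℂ = 0 := by
  obtain ⟨V, hVS, _, hVm⟩ := Submodule.exists_le_finrank_eq hm
  -- an eigenbasis of the compression of `T` to `V`
  set C := V.starProjection ∘L T ∘L V.starProjection
  have hC : (C : H →ₗ[ℂ] H).IsSymmetric := (hT.conj_starProjection V).isSymmetric
  have hCV : ∀ x ∈ V, (C : H →ₗ[ℂ] H) x ∈ V := fun x _ => V.starProjection_apply_mem _
  have hCr := hC.restrict_invariant hCV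
  set b := hCr.eigenvectorBasis hVm
  refine ⟨fun i => b i, b.orthonormal.comp_linearIsometry V.subtypeₗᵢ, fun i => hVS (b i).2,
    fun i j hij => ?_⟩
  have hPV : ∀ x ∈ V, V.starProjection x = x := fun x hx => V.starProjection_eq_self_iff.mpr hx
  have hTC : ⟪(b i : H), T (b j)⟫_ℂ = ⟪b i, (C : H →ₗ[ℂ] H).restrict hCV (b j)⟫_ℂ := by
    have hP : ∀ x y, ⟪V.starProjection x, y⟫_ℂ = ⟪x, V.starProjection y⟫_ℂ :=
      (isSelfAdjoint_starProjection V).isSymmetric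
    show _ = ⟪(b i : H), V.starProjection (T (V.starProjection (b j)))⟫_ℂ
    rw [hPV _ (b j).2, ← hP, hPV _ (b i).2]
  show ⟪(b i : H), T (b j)⟫_ℂ = 0
  rw [hTC, hCr.apply_eigenvectorBasis, inner_smul_right, b.orthonormal.inner_eq_zero hij, mul_zero]

lemma exists_orthonormal_inner_apply_eq_zero_of_pairing {T : H →L[ℂ] H} (hT : IsSelfAdjoint T)
    {m : ℕ} {u v : Fin m → H} (hu : Orthonormal ℂ u) (hv : Orthonormal ℂ v)
    (huv : ∀ i j, ⟪u i, v j⟫_ℂ = 0) (hTuv : ∀ i j, ⟪u i, T (v j)⟫_ℂ = 0)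
    (hTu : Pairwise fun i j => ⟪u i, T (u j)⟫_ℂ = 0)
    (hTv : Pairwise fun i j => ⟪v i, T (v j)⟫_ℂ = 0)
    (hu_nonneg : ∀ i, 0 ≤ re ⟪u i, T (u i)⟫_ℂ) (hv_nonpos : ∀ i, re ⟪v i, T (v i)⟫_ℂ ≤ 0)
    {S : Submodule ℂ H} (huS : ∀ i, u i ∈ S) (hvS : ∀ i, v i ∈ S) :
    ∃ z : Fin m → H, Orthonormal ℂ z ∧ (∀ i j, ⟪z i, T (z j)⟫_ℂ = 0) ∧ ∀ i, z i ∈ S := by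
  choose α β hαβ hq using fun i =>
    exists_sq_add_sq_eq_one_and_sq_mul_eq (hu_nonneg i) (neg_nonneg.mpr (hv_nonpos i))
  set z : Fin m → H := fun i => (α i : ℂ) • u i + (β i : ℂ) • v i
  have hvu : ∀ i j, ⟪v i, u j⟫_ℂ = 0 := fun i j => inner_eq_zero_symm.mp (huv j i)
  have hTvu : ∀ i j, ⟪v i, T (u j)⟫_ℂ = 0 := fun i j => by
    rw [← ContinuousLinearMap.adjoint_inner_left, hT.adjoint_eq, inner_eq_zero_symm, hTuv]
  have expand : ∀ (R : H →L[ℂ] H) i j, ⟪z i, R (z j)⟫_ℂ =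
      α i * α j * ⟪u i, R (u j)⟫_ℂ + α i * β j * ⟪u i, R (v j)⟫_ℂ +
        β i * α j * ⟪v i, R (u j)⟫_ℂ + β i * β j * ⟪v i, R (v j)⟫_ℂ := by
    intro R i j
    simp only [z, map_add, map_smul, inner_add_left, inner_add_right, inner_smul_left,
      inner_smul_right, conj_ofReal]
    ring
  have hz : Orthonormal ℂ z := by
    rw [orthonormal_iff_ite]
    intro i j
    have h := expand 1 i j
    simp only [one_apply_eq_self] at h
    rw [h, orthonormal_iff_ite.mp hu, orthonormal_iff_ite.mp hv, huv, hvu]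
    split_ifs with hij
    · subst hij
      have h1 := congrArg ofReal (hαβ i)
      push_cast at h1
      linear_combination h1
    · ring
  refine ⟨z, hz, fun i j => ?_, fun i => S.add_mem (S.smul_mem _ (huS i)) (S.smul_mem _ (hvS i))⟩
  rw [expand, hTuv, hTvu]
  rcases eq_or_ne i j with rfl | hij
  · have h0 := congrArg ofReal (hq i)
    push_cast at h0
    linear_combination h0 - (α i : ℂ) ^ 2 * hT.ofReal_re_inner_apply_self (u i) -
      (β i : ℂ) ^ 2 * hT.ofReal_re_inner_apply_self (v i)
  · rw [hTu hij, hTv hij]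
    ring

lemma exists_isNeutral_le_orthogonal_inf {T : H →L[ℂ] H} (hT : IsSelfAdjoint T) {m : ℕ}
    (hpos : (m : Cardinal) ≤ Module.rank ℂ (nonnegSubspace (-T))ᗮ)
    (hneg : (m : Cardinal) ≤ Module.rank ℂ (nonnegSubspace T)ᗮ) :
    ∃ Z ≤ (nonnegSubspace T ⊓ nonnegSubspace (-T))ᗮ,
      FiniteDimensional ℂ Z ∧ Module.finrank ℂ Z = m ∧ IsNeutral T Z := by
  have hle : (nonnegSubspace (-T))ᗮ ≤ nonnegSubspace T := by
    simpa using orthogonal_nonnegSubspace_le (-T)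
  obtain ⟨u, hu, huE, hTu⟩ := exists_orthonormal_pairwise_inner_apply_eq_zero hT hpos
  obtain ⟨v, hv, hvE, hTv⟩ := exists_orthonormal_pairwise_inner_apply_eq_zero hT hneg
  have hTvE : ∀ j, T (v j) ∈ (nonnegSubspace T)ᗮ := fun j =>
    hT.apply_mem_orthogonal (fun _ hx => apply_mem_nonnegSubspace hT hx) (hvE j)
  have hv_nonpos : ∀ j, re ⟪v j, T (v j)⟫_ℂ ≤ 0 := fun j => by
    simpa [inner_neg_right] using
      re_inner_apply_self_nonneg hT.neg (orthogonal_nonnegSubspace_le T (hvE j))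
  obtain ⟨z, hz, hTz, hzK⟩ := exists_orthonormal_inner_apply_eq_zero_of_pairing hT hu hv
    (fun i j => Submodule.inner_right_of_mem_orthogonal (hle (huE i)) (hvE j))
    (fun i j => Submodule.inner_right_of_mem_orthogonal (hle (huE i)) (hTvE j)) hTu hTv
    (fun i => re_inner_apply_self_nonneg hT (hle (huE i))) hv_nonpos
    (fun i => Submodule.orthogonal_le inf_le_right (huE i))
    (fun i => Submodule.orthogonal_le inf_le_left (hvE i))
  exact exists_isNeutral_of_orthonormal hz hTz hzK

lemma exists_isNeutral_finrank_eq {T : H →L[ℂ] H} (hT : IsSelfAdjoint T) {k : ℕ}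
    (hpos : (k : Cardinal) ≤ Module.rank ℂ (nonnegSubspace T))
    (hneg : (k : Cardinal) ≤ Module.rank ℂ (nonnegSubspace (-T))) :
    ∃ U : Submodule ℂ H, FiniteDimensional ℂ U ∧ Module.finrank ℂ U = k ∧ IsNeutral T U := by
  set K := nonnegSubspace T ⊓ nonnegSubspace (-T)
  have hK := nonnegSubspace_inf_nonnegSubspace_neg_le_ker hT
  by_cases hKk : (k : Cardinal) ≤ Module.rank ℂ K
  · obtain ⟨U, hUK, hU, hUk⟩ := Submodule.exists_le_finrank_eq hKk
    exact ⟨U, hU, hUk, isNeutral_of_le_ker (hUK.trans hK)⟩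
  rw [not_le] at hKk
  have : FiniteDimensional ℂ K :=
    Module.rank_lt_aleph0_iff.mp (hKk.trans Cardinal.natCast_lt_aleph0)
  have hdk : Module.finrank ℂ K < k := by
    rw [← Module.finrank_eq_rank] at hKk
    exact_mod_cast hKk
  have := (isClosed_nonnegSubspace T).completeSpace_coe
  have := (isClosed_nonnegSubspace (-T)).completeSpace_coe
  obtain ⟨Z, hZK, _, hZm, hZ⟩ := exists_isNeutral_le_orthogonal_inf hT
    (Submodule.natCast_sub_finrank_le_rank_orthogonal (K := K)
      (by simpa using orthogonal_nonnegSubspace_le (-T)) le_rfl hpos)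
    (Submodule.natCast_sub_finrank_le_rank_orthogonal (orthogonal_nonnegSubspace_le T)
      (inf_comm _ _).le hneg)
  refine ⟨K ⊔ Z, inferInstance, ?_, hZ.sup_of_le_ker hT hK⟩
  have hKZ : K ⊓ Z = ⊥ :=
    eq_bot_iff.mpr ((inf_le_inf_left K hZK).trans K.inf_orthogonal_eq_bot.le)
  have := Submodule.finrank_sup_add_finrank_inf_eq K Z
  rw [hKZ, finrank_bot, hZm] at this
  omega

/-- `A = Ã₁ ⊕ Ã₂` with `dim Ã₁ < k`, `W(Ã₁) ⊆ L` and `W(Ã₂) ⊆ ℝ \ L`. -/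
def HasSeparatingDecomposition (A : H →L[ℂ] H) (k : ℕ) (L : Set ℝ) : Prop :=
  ∃ V₁ V₂ : Submodule ℂ H,
    IsClosed (V₁ : Set H) ∧ IsClosed (V₂ : Set H) ∧
    (∀ x ∈ V₁, ∀ y ∈ V₂, ⟪x, y⟫_ℂ = 0) ∧
    V₁ ⊔ V₂ = ⊤ ∧
    (∀ x ∈ V₁, A x ∈ V₁) ∧
    (∀ x ∈ V₂, A x ∈ V₂) ∧
    Module.rank ℂ V₁ < k ∧
    (∀ x ∈ V₁, ‖x‖ = 1 → ⟪x, A x⟫_ℂ ∈ Complex.ofReal '' L) ∧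
    (∀ x ∈ V₂, ‖x‖ = 1 → ⟪x, A x⟫_ℂ ∈ Complex.ofReal '' Lᶜ)

lemma hasSeparatingDecomposition_of_invariant {A : H →L[ℂ] H} (hA : IsSelfAdjoint A)
    {V : Submodule ℂ H} (hVc : IsClosed (V : Set H)) (hAV : ∀ x ∈ V, A x ∈ V) {k : ℕ}
    (hVk : Module.rank ℂ V < k) {L : Set ℝ} (hL : ∀ x ∈ V, ‖x‖ = 1 → re ⟪x, A x⟫_ℂ ∈ L)
    (hLc : ∀ x ∈ Vᗮ, ‖x‖ = 1 → re ⟪x, A x⟫_ℂ ∉ L) :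
    HasSeparatingDecomposition A k L := by
  have := hVc.completeSpace_coe
  exact ⟨V, Vᗮ, hVc, V.isClosed_orthogonal,
    fun x hx y hy => Submodule.inner_right_of_mem_orthogonal hx hy,
    V.sup_orthogonal_of_hasOrthogonalProjection, hAV, fun x hx => hA.apply_mem_orthogonal hAV hx,
    hVk, fun x hx hx1 => ⟨_, hL x hx hx1, hA.ofReal_re_inner_apply_self x⟩,
    fun x hx hx1 => ⟨_, hLc x hx hx1, hA.ofReal_re_inner_apply_self x⟩⟩

lemma hasSeparatingDecomposition_Ici {A : H →L[ℂ] H} (hA : IsSelfAdjoint A) {lam : ℝ} {k : ℕ}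
    (hk : Module.rank ℂ (nonnegSubspace (A - (lam : ℂ) • 1)) < k) :
    HasSeparatingDecomposition A k (Set.Ici lam) := by
  set T := A - (lam : ℂ) • 1
  have hT : IsSelfAdjoint T := isSelfAdjoint_sub_ofReal_smul_one hA lam
  have hAT : ∀ x, A x = T x + (lam : ℂ) • x := fun x => by simp [T]
  have hre : ∀ x : H, ‖x‖ = 1 → re ⟪x, A x⟫_ℂ = re ⟪x, T x⟫_ℂ + lam := fun x hx => by
    rw [hAT, inner_add_right, inner_smul_right, inner_self_eq_norm_sq_to_K, hx]
    simp
  refine hasSeparatingDecomposition_of_invariant hA (isClosed_nonnegSubspace T)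
    (fun x hx => ?_) hk (fun x hx hx1 => ?_) (fun x hx hx1 => ?_)
  · rw [hAT]
    exact add_mem (apply_mem_nonnegSubspace hT hx) (Submodule.smul_mem _ _ hx)
  · rw [Set.mem_Ici, hre x hx1]
    linarith [re_inner_apply_self_nonneg hT hx]
  · rw [Set.mem_Ici, hre x hx1, not_le]
    linarith [re_inner_apply_self_neg hT hx (by rintro rfl; simp at hx1)]

lemma hasSeparatingDecomposition_Iic {A : H →L[ℂ] H} (hA : IsSelfAdjoint A) {lam : ℝ} {k : ℕ}
    (hk : Module.rank ℂ (nonnegSubspace (-(A - (lam : ℂ) • 1))) < k) :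
    HasSeparatingDecomposition A k (Set.Iic lam) := by
  set T := -(A - (lam : ℂ) • 1)
  have hT : IsSelfAdjoint T := (isSelfAdjoint_sub_ofReal_smul_one hA lam).neg
  have hAT : ∀ x, A x = (lam : ℂ) • x - T x := fun x => by simp [T]
  have hre : ∀ x : H, ‖x‖ = 1 → re ⟪x, A x⟫_ℂ = lam - re ⟪x, T x⟫_ℂ := fun x hx => by
    rw [hAT, inner_sub_right, inner_smul_right, inner_self_eq_norm_sq_to_K, hx]
    simp
  refine hasSeparatingDecomposition_of_invariant hA (isClosed_nonnegSubspace T)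
    (fun x hx => ?_) hk (fun x hx hx1 => ?_) (fun x hx hx1 => ?_)
  · rw [hAT]
    exact sub_mem (Submodule.smul_mem _ _ hx) (apply_mem_nonnegSubspace hT hx)
  · rw [Set.mem_Iic, hre x hx1]
    linarith [re_inner_apply_self_nonneg hT hx]
  · rw [Set.mem_Iic, hre x hx1, not_le]
    linarith [re_inner_apply_self_neg hT hx (by rintro rfl; simp at hx1)]

theorem not_mem_rankKRange_iff_selfAdjoint_general
    (A : H →L[ℂ] H) (hA : IsSelfAdjoint A)
    (k : ℕ) (lam : ℝ) :
    (lam : ℂ) ∉ rankKRange k A ↔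
      ∃ L : Set ℝ, (L = Set.Ici lam ∨ L = Set.Iic lam) ∧
        ∃ V₁ V₂ : Submodule ℂ H,
          IsClosed (V₁ : Set H) ∧ IsClosed (V₂ : Set H) ∧
          (∀ x ∈ V₁, ∀ y ∈ V₂, ⟪x, y⟫_ℂ = 0) ∧
          V₁ ⊔ V₂ = ⊤ ∧
          (∀ x ∈ V₁, A x ∈ V₁) ∧
          (∀ x ∈ V₂, A x ∈ V₂) ∧
          Module.rank ℂ V₁ < k ∧
          (∀ x ∈ V₁, ‖x‖ = 1 → ⟪x, A x⟫_ℂ ∈ Complex.ofReal '' L) ∧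
          (∀ x ∈ V₂, ‖x‖ = 1 → ⟪x, A x⟫_ℂ ∈ Complex.ofReal '' Lᶜ) := by
  constructor
  · intro hlam
    rcases lt_or_ge (Module.rank ℂ (nonnegSubspace (A - (lam : ℂ) • 1))) k with hpos | hpos
    · exact ⟨Set.Ici lam, Or.inl rfl, hasSeparatingDecomposition_Ici hA hpos⟩
    rcases lt_or_ge (Module.rank ℂ (nonnegSubspace (-(A - (lam : ℂ) • 1)))) k with hneg | hneg
    · exact ⟨Set.Iic lam, Or.inr rfl, hasSeparatingDecomposition_Iic hA hneg⟩
    obtain ⟨U, _, hUk, hU⟩ :=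
      exists_isNeutral_finrank_eq (isSelfAdjoint_sub_ofReal_smul_one hA lam) hpos hneg
    exact absurd (hUk ▸ mem_rankKRange_of_isNeutral U hU) hlam
  · rintro ⟨L, hL, V₁, V₂, -, -, horth, hsup, -, -, hrank, -, hW₂⟩ hlam
    have hlamL : lam ∈ L := by rcases hL with rfl | rfl <;> simp
    obtain ⟨x, hx, hx1, hAx⟩ :=
      exists_mem_orthogonal_inner_apply_self_eq_of_mem_rankKRange hlam hrank
    obtain ⟨t, ht, hteq⟩ := hW₂ x (Submodule.orthogonal_le_of_sup_eq_top horth hsup hx) hx1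
    exact ht (ofReal_injective (hteq.trans hAx) ▸ hlamL)

/-- For a self-adjoint operator `A`, `k ≤ dim ℋ`, and `λ ∈ ℝ`: `λ ∉ Λ_k(A)` iff `ℋ`
decomposes orthogonally as `V₁ ⊕ V₂` with both summands invariant under `A`,
`dim V₁ < k`, the numerical range of the restriction of `A` to `V₁` contained in `L`
and that of the restriction to `V₂` contained in `ℝ \ L`, where `L = [λ,∞)` or
`L = (-∞,λ]`. -/
theorem not_mem_rankKRange_iff_selfAdjoint
    (A : H →L[ℂ] H) (hA : IsSelfAdjoint A)
    (k : ℕ) (hk : 1 ≤ k) (hkdim : (k : Cardinal) ≤ Module.rank ℂ H) (lam : ℝ) :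
    (lam : ℂ) ∉ rankKRange k A ↔
      ∃ L : Set ℝ, (L = Set.Ici lam ∨ L = Set.Iic lam) ∧
        ∃ V₁ V₂ : Submodule ℂ H,
          IsClosed (V₁ : Set H) ∧ IsClosed (V₂ : Set H) ∧
          (∀ x ∈ V₁, ∀ y ∈ V₂, ⟪x, y⟫_ℂ = 0) ∧
          V₁ ⊔ V₂ = ⊤ ∧
          (∀ x ∈ V₁, A x ∈ V₁) ∧
          (∀ x ∈ V₂, A x ∈ V₂) ∧
          Module.rank ℂ V₁ < k ∧
          (∀ x ∈ V₁, ‖x‖ = 1 → ⟪x, A x⟫_ℂ ∈ Complex.ofReal '' L) ∧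
          (∀ x ∈ V₂, ‖x‖ = 1 → ⟪x, A x⟫_ℂ ∈ Complex.ofReal '' Lᶜ) :=
  not_mem_rankKRange_iff_selfAdjoint_general A hA k lam
end
end

section
/- Let ℋ be a complex Hilbert space, A ∈ B(ℋ), and 1 ≤ r < k < ∞ with k ≤ dim ℋ. Then Λ_k(A) ⊆ ⋂{Λ_{k−r}(X*AX) : X ∈ V_r}, i.e., for every linear isometry X whose range is a closed subspace of ℋ of codimension at most r, every λ ∈ Λ_k(A) lies in Λ_{k−r}(X*AX). -/
noncomputable section

open scoped InnerProductSpace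
open Complex

variable {H : Type*} [NormedAddCommGroup H] [InnerProductSpace ℂ H] [CompleteSpace H]

variable {K : Type*} [NormedAddCommGroup K] [InnerProductSpace ℂ K] [CompleteSpace K]

/-- The compression `X*AX` of `A` by a linear isometry `X : 𝒦 → ℋ`. -/
def compress (X : K →ₗᵢ[ℂ] H) (A : H →L[ℂ] H) : K →L[ℂ] K :=
  ContinuousLinearMap.adjoint X.toContinuousLinearMap ∘L
    (A ∘L X.toContinuousLinearMap)

/-- `X ∈ V_r`: the range of the isometry `X` is the orthogonal complement of a
subspace of dimension at most `r`. -/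
def MemVr (r : ℕ) (X : K →ₗᵢ[ℂ] H) : Prop :=
  ∃ H₁ : Submodule ℂ H, Module.rank ℂ H₁ ≤ r ∧ LinearMap.range X.toLinearMap = H₁ᗮ

/-! With `P` of rank `k`, `P A P = λ P` says exactly that `⟪x, A y⟫ = λ ⟪x, y⟫` on the
`k`-dimensional range `M` of `P`, a condition inherited by every subspace of `M`. Since `ℋ₁` has
dimension at most `r`, the subspace `M ⊓ ℋ₁ᗮ` has dimension at least `k - r`; it lies in the
range of `X`, so its preimage under the isometry `X` has the same dimension, and there `X*AX`
again satisfies `⟪u, X*AX v⟫ = ⟪Xu, A Xv⟫ = λ ⟪u, v⟫`. -/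

open Module

namespace Submodule

variable {R M : Type*} [DivisionRing R] [AddCommGroup M] [Module R M]

theorem exists_finiteDimensional_le_of_le_finrank {n : ℕ} (p : Submodule R M)
    (h : n ≤ finrank R p) : ∃ q ≤ p, FiniteDimensional R q ∧ finrank R q = n := by
  obtain ⟨f, hf⟩ := exists_linearIndependent_of_le_finrank h
  refine ⟨span R (Set.range (p.subtype ∘ f)), ?_,
    FiniteDimensional.span_of_finite R (Set.finite_range _), ?_⟩
  · rw [span_le]
    rintro _ ⟨i, rfl⟩
    exact (f i).2
  · rw [finrank_span_eq_card (hf.map' p.subtype p.ker_subtype), Fintype.card_fin]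

theorem finrank_sub_le_finrank_inf_ker {W : Type*} [AddCommGroup W] [Module R W]
    [FiniteDimensional R W] (p : Submodule R M) [FiniteDimensional R p] (f : M →ₗ[R] W) :
    finrank R p - finrank R W ≤ finrank R ↥(p ⊓ LinearMap.ker f) := by
  have hrank := (f.domRestrict p).finrank_range_add_finrank_ker
  have hrange := (LinearMap.range (f.domRestrict p)).finrank_le
  rw [← map_comap_subtype, finrank_map_subtype_eq, ← LinearMap.ker_domRestrict]
  omega

theorem finrank_comap_eq_of_le_range {N : Type*} [AddCommGroup N] [Module R N] {f : N →ₗ[R] M}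
    (hf : Function.Injective f) {p : Submodule R M} (hp : p ≤ LinearMap.range f) :
    finrank R (p.comap f) = finrank R p := by
  rw [(equivMapOfInjective f hf _).finrank_eq, map_comap_eq_self hp]

end Submodule

section ScalarCompression

variable {𝕜 E : Type*} [RCLike 𝕜] [NormedAddCommGroup E] [InnerProductSpace 𝕜 E]

/-- The form of `P_V A P_V = lam P_V` that makes sense without the projection `P_V`. -/
def IsScalarCompression (A : E →L[𝕜] E) (lam : 𝕜) (V : Submodule 𝕜 E) : Prop :=
  ∀ x ∈ V, ∀ y ∈ V, ⟪x, A y⟫_𝕜 = lam * ⟪x, y⟫_𝕜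

theorem IsScalarCompression.mono {A : E →L[𝕜] E} {lam : 𝕜} {V W : Submodule 𝕜 E}
    (h : IsScalarCompression A lam V) (hWV : W ≤ V) : IsScalarCompression A lam W :=
  fun x hx y hy => h x (hWV hx) y (hWV hy)

theorem starProjection_comp_comp_starProjection_eq_smul_iff (A : E →L[𝕜] E) (lam : 𝕜)
    (V : Submodule 𝕜 E) [V.HasOrthogonalProjection] :
    V.starProjection ∘L A ∘L V.starProjection = lam • V.starProjection ↔
      IsScalarCompression A lam V := by
  set P := V.starProjection
  have hP : ∀ x y : E, ⟪P x, y⟫_𝕜 = ⟪x, P y⟫_𝕜 := V.starProjection_isSymmetric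
  have hPV : ∀ x, P x ∈ V := V.starProjection_apply_mem
  have hPfix : ∀ x ∈ V, P x = x := fun x hx => V.starProjection_eq_self_iff.mpr hx
  constructor
  · intro h x hx y hy
    have hxy := congrArg (fun T : E →L[𝕜] E => ⟪x, T y⟫_𝕜) h
    simpa only [ContinuousLinearMap.comp_apply, smul_apply,
      inner_smul_right, ← hP, hPfix x hx, hPfix y hy] using hxy
  · intro h
    ext y
    refine ext_inner_left 𝕜 fun x => ?_
    calc ⟪x, P (A (P y))⟫_𝕜 = lam * ⟪P x, P y⟫_𝕜 := by rw [← hP, h _ (hPV x) _ (hPV y)]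
      _ = ⟪x, lam • P y⟫_𝕜 := by rw [hP, hPfix _ (hPV y), inner_smul_right]

end ScalarCompression

theorem isOrthProj_iff_isStarProjection {P : H →L[ℂ] H} : IsOrthProj P ↔ IsStarProjection P :=
  ⟨fun h => ⟨h.2, h.1⟩, fun h => ⟨h.isSelfAdjoint, h.isIdempotentElem⟩⟩

theorem mem_rankKRange_iff {k : ℕ} {A : H →L[ℂ] H} {lam : ℂ} :
    lam ∈ rankKRange k A ↔ ∃ V : Submodule ℂ H,
      FiniteDimensional ℂ V ∧ finrank ℂ V = k ∧ IsScalarCompression A lam V := by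
  constructor
  · rintro ⟨P, hP, hrank, hPAP⟩
    obtain ⟨V, _, rfl⟩ :=
      isStarProjection_iff_eq_starProjection.mp (isOrthProj_iff_isStarProjection.mp hP)
    rw [opRank, Submodule.range_starProjection] at hrank
    have hV : FiniteDimensional ℂ V :=
      Module.rank_lt_aleph0_iff.mp (hrank ▸ Cardinal.natCast_lt_aleph0)
    exact ⟨V, hV, finrank_eq_of_rank_eq hrank,
      (starProjection_comp_comp_starProjection_eq_smul_iff A lam V).mp hPAP⟩
  · rintro ⟨V, _, hk, hV⟩
    refine ⟨V.starProjection, isOrthProj_iff_isStarProjection.mpr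
      isStarProjection_starProjection, ?_,
      (starProjection_comp_comp_starProjection_eq_smul_iff A lam V).mpr hV⟩
    rw [opRank, Submodule.range_starProjection, ← finrank_eq_rank, hk]

theorem IsScalarCompression.comap_compress {A : H →L[ℂ] H} {lam : ℂ} {V : Submodule ℂ H}
    (h : IsScalarCompression A lam V) (X : K →ₗᵢ[ℂ] H) :
    IsScalarCompression (compress X A) lam (V.comap X.toLinearMap) := by
  intro u hu v hv
  rw [compress, ContinuousLinearMap.comp_apply, ContinuousLinearMap.comp_apply,
    ContinuousLinearMap.adjoint_inner_right]
  exact (h _ hu _ hv).trans (congrArg _ (X.inner_map_map u v))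

theorem rankKRange_subset_compress_general
    (r k : ℕ)
    (A : H →L[ℂ] H) (X : K →ₗᵢ[ℂ] H) (hX : MemVr r X) :
    rankKRange k A ⊆ rankKRange (k - r) (compress X A) := by
  obtain ⟨H₁, hH₁r, hXrange⟩ := hX
  have : FiniteDimensional ℂ H₁ :=
    Module.rank_lt_aleph0_iff.mp (hH₁r.trans_lt Cardinal.natCast_lt_aleph0)
  intro lam hlam
  obtain ⟨M, _, hMk, hM⟩ := mem_rankKRange_iff.mp hlam
  have hdim : k - r ≤ finrank ℂ ((M ⊓ H₁ᗮ).comap X.toLinearMap) := by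
    rw [Submodule.finrank_comap_eq_of_le_range X.injective (hXrange ▸ inf_le_right),
      ← Submodule.ker_orthogonalProjectionOnto]
    have := M.finrank_sub_le_finrank_inf_ker (H₁.orthogonalProjectionOnto : H →ₗ[ℂ] H₁)
    have := finrank_le_of_rank_le hH₁r
    omega
  obtain ⟨L, hL, _, hLk⟩ := Submodule.exists_finiteDimensional_le_of_le_finrank _ hdim
  exact mem_rankKRange_iff.mpr
    ⟨L, inferInstance, hLk, ((hM.mono inf_le_left).comap_compress X).mono hL⟩

/-- For `1 ≤ r < k ≤ dim ℋ`: every `λ ∈ Λ_k(A)` lies in `Λ_{k-r}(X*AX)` for every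
isometry `X ∈ V_r` (from any complex Hilbert space into `ℋ`). -/
theorem rankKRange_subset_compress
    (r k : ℕ) (hr : 1 ≤ r) (hrk : r < k) (hk : (k : Cardinal) ≤ Module.rank ℂ H)
    (A : H →L[ℂ] H) (X : K →ₗᵢ[ℂ] H) (hX : MemVr r X) :
    rankKRange k A ⊆ rankKRange (k - r) (compress X A) :=
  rankKRange_subset_compress_general r k A X hX
end
end
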